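/- Let E₁(m) denote the unique root in [π²/16, π²/4) of m·sin(2√E) + √E·cos(2√E) = 0. Then E₁(m) = π²/4 − π²/(4m) + O(m⁻²) as m → +∞. -/

import Mathlib

open Real Filter Asymptotics


lemma my_arctan_le_self {x : ℝ} (hx : 0 ≤ x) : Real.arctan x ≤ x := by
  have key : MonotoneOn (fun t : ℝ => t - Real.arctan t) (Set.Ici 0) := by
    apply monotoneOn_of_deriv_nonneg (convex_Ici 0) (Continuous.continuousOn (by continuity))
      (Differentiable.differentiableOn (fun t => ((differentiable_id t).sub
        (Real.differentiable_arctan t))))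
    intro t ht
    have h : HasDerivAt (fun t : ℝ => t - Real.arctan t) (1 - 1/(1+t^2)) t :=
      (hasDerivAt_id t).sub (Real.hasDerivAt_arctan t)
    rw [show deriv (id - Real.arctan) t = 1 - 1/(1+t^2) from h.deriv]
    have : 1/(1+t^2) ≤ 1 := by
      rw [div_le_one (by positivity)]; nlinarith [sq_nonneg t]
    linarith
  have := key Set.self_mem_Ici (Set.mem_Ici.2 hx) hx
  simpa [Real.arctan_zero] using this

lemma my_self_sub_sq_le_arctan {x : ℝ} (hx : 0 ≤ x) : x - x^2 ≤ Real.arctan x := by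
  have key : MonotoneOn (fun t : ℝ => t^2 - t + Real.arctan t) (Set.Ici 0) := by
    apply monotoneOn_of_deriv_nonneg (convex_Ici 0) (Continuous.continuousOn (by continuity))
      (Differentiable.differentiableOn (fun t => (((differentiable_pow 2) t).sub
        (differentiable_id t)).add (Real.differentiable_arctan t)))
    intro t ht
    have ht0 : 0 < t := by simpa using ht
    have h : HasDerivAt (fun t : ℝ => t^2 - t + Real.arctan t)
        ((2 * t^1 - 1) + 1/(1+t^2)) t :=
      ((hasDerivAt_pow 2 t).sub (hasDerivAt_id t)).add (Real.hasDerivAt_arctan t)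
    rw [show deriv ((fun x : ℝ => x ^ 2) - id + Real.arctan) t = (2 * t^1 - 1) + 1/(1+t^2)
      from h.deriv]
    have h1 : 1 - 1/(1+t^2) ≤ t := by
      rw [sub_le_iff_le_add, ← sub_le_iff_le_add']
      rw [le_div_iff₀ (by positivity : (0:ℝ) < 1 + t^2)]
      nlinarith [sq_nonneg t, sq_nonneg (1-t)]
    nlinarith
  have := key Set.self_mem_Ici (Set.mem_Ici.2 hx) hx
  simp [Real.arctan_zero] at this
  linarith
/-- Let `E₁(m)` be the unique root in `[π²/16, π²/4)` of
`m·sin(2√E) + √E·cos(2√E) = 0`.  Then `E₁(m) = π²/4 − π²/(4m) + O(m⁻²)` as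
`m → +∞`. -/
theorem E1_asymptotics_at_infinity (E₁ : ℝ → ℝ)
    (hE₁ : ∀ m : ℝ, 0 < m → E₁ m ∈ Set.Ico (π^2 / 16) (π^2 / 4) ∧
      m * Real.sin (2 * Real.sqrt (E₁ m)) +
        Real.sqrt (E₁ m) * Real.cos (2 * Real.sqrt (E₁ m)) = 0) :
    (fun m : ℝ => E₁ m - (π^2 / 4 - π^2 / (4 * m))) =O[atTop] (fun m : ℝ => 1 / m^2) := by
  rw [isBigO_iff]
  refine ⟨10, ?_⟩
  filter_upwards [eventually_ge_atTop (1:ℝ)] with m hm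
  have hm0 : (0:ℝ) < m := lt_of_lt_of_le one_pos hm
  have hm' : m ≠ 0 := ne_of_gt hm0
  obtain ⟨hIco, heq⟩ := hE₁ m hm0
  set E := E₁ m with hEdef
  have hπ := Real.pi_pos
  have hπ1 : (3:ℝ) < π := Real.pi_gt_three
  have hπ2 : π < 3.15 := by linarith [Real.pi_lt_d2]
  have hE0 : (0:ℝ) ≤ E := le_trans (by positivity) hIco.1
  set s := Real.sqrt E with hs
  have hsq : s^2 = E := Real.sq_sqrt hE0
  have hs0 : 0 ≤ s := Real.sqrt_nonneg E
  have hs1 : π/4 ≤ s := by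
    have h := Real.sqrt_le_sqrt hIco.1
    rwa [show π^2/16 = (π/4)^2 by ring, Real.sqrt_sq (by positivity)] at h
  have hs2 : s < π/2 := by
    rw [hs, show π/2 = Real.sqrt ((π/2)^2) from (Real.sqrt_sq (by positivity)).symm]
    exact Real.sqrt_lt_sqrt hE0 (by nlinarith [hIco.2])
  -- cos (2s) ≠ 0
  have hcos_ne : Real.cos (2*s) ≠ 0 := by
    intro h0
    have heq'' : m * Real.sin (2*s) + s * Real.cos (2*s) = 0 := by rw [hs]; exact heq
    rw [h0, mul_zero, add_zero] at heq''
    have hsin : Real.sin (2*s) = 0 := (mul_eq_zero.1 heq'').resolve_left hm'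
    have := Real.sin_sq_add_cos_sq (2*s)
    rw [hsin, h0] at this; norm_num at this
  have hs1' : π/4 < s := by
    rcases lt_or_eq_of_le hs1 with h | h
    · exact h
    · exfalso; apply hcos_ne; rw [← h, show 2*(π/4) = π/2 by ring, Real.cos_pi_div_two]
  set δ := π - 2*s with hδdef
  have hδ0 : 0 < δ := by simp only [hδdef]; linarith
  have hδlt : δ < π/2 := by simp only [hδdef]; linarith
  -- tan δ = s / m
  have heq' : m * Real.sin (2*s) + s * Real.cos (2*s) = 0 := by rw [hs]; exact heq
  have htan : Real.tan δ = s / m := by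
    rw [Real.tan_eq_sin_div_cos, hδdef, Real.sin_pi_sub, Real.cos_pi_sub]
    have hsin : Real.sin (2*s) = s * (-Real.cos (2*s)) / m := by
      field_simp; linarith [heq']
    rw [hsin]
    field_simp
    ring_nf; rw [mul_comm s 2, mul_inv_cancel_right₀ hcos_ne]
  have hδeq : δ = Real.arctan (s/m) := by
    rw [← htan, Real.arctan_tan (by linarith) hδlt]
  -- bounds on δ
  have hsm0 : 0 ≤ s/m := by positivity
  have hub : δ ≤ s/m := hδeq ▸ my_arctan_le_self hsm0
  have hlb : s/m - (s/m)^2 ≤ δ := hδeq ▸ my_self_sub_sq_le_arctan hsm0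
  have h1 : δ * m ≤ s := by
    have h := mul_le_mul_of_nonneg_right hub hm0.le
    rwa [div_mul_cancel₀ _ hm'] at h
  have h2 : s * m - s^2 ≤ δ * m^2 := by
    have h := mul_le_mul_of_nonneg_right hlb (sq_nonneg m)
    have e1 : (s/m - (s/m)^2) * m^2 = s*m - s^2 := by field_simp
    rwa [e1] at h
  -- rewrite the difference
  have hEδ : E = ((π - δ)/2)^2 := by rw [← hsq, hδdef]; ring
  have key : E - (π^2/4 - π^2/(4*m)) =
      (π^2*m - 2*π*δ*m^2 + δ^2*m^2) / (4*m^2) := by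
    rw [hEδ]; field_simp; ring
  rw [Real.norm_eq_abs, Real.norm_eq_abs, key]
  have A : 2*π*(s*m - s^2) ≤ 2*π*(δ*m^2) :=
    mul_le_mul_of_nonneg_left h2 (by positivity)
  have B' : (δ*m)^2 ≤ s^2 := pow_le_pow_left₀ (mul_nonneg hδ0.le hm0.le) h1 2
  have C : π*(δ*m) ≤ π*s := mul_le_mul_of_nonneg_left h1 (by positivity)
  have D : π*s ≤ π*(π/2) := mul_le_mul_of_nonneg_left hs2.le (by positivity)
  have E2 : s^2 ≤ (π/2)^2 := pow_le_pow_left₀ hs0 hs2.le 2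
  have F : 2*π*s^2 ≤ 2*π*(π/2)^2 := mul_le_mul_of_nonneg_left E2 (by positivity)
  have hπsq : π^2 ≤ 10 := by clear * - hπ1 hπ2; nlinarith
  have hπcb : π^3 ≤ 32 := by
    clear * - hπ1 hπ2 hπsq
    nlinarith [mul_le_mul_of_nonneg_right hπsq Real.pi_pos.le, hπ2, hπ1]
  have hPeq : π^2*m - 2*π*δ*m^2 + δ^2*m^2
      = π*(δ*m) + 2*π*(s*m) - 2*π*(δ*m^2) + (δ*m)^2 := by
    rw [hδdef]; ring
  have hP : π^2*m - 2*π*δ*m^2 + δ^2*m^2 ≤ 40 := by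
    rw [hPeq]; clear * - A B' C D E2 F hπsq hπcb; nlinarith [A, B', C, D, E2, F, hπsq, hπcb]
  have G : δ*m^2 ≤ s*m := by
    have := mul_le_mul_of_nonneg_right h1 hm0.le
    clear * - this; nlinarith [this]
  have I : 2*π*(δ*m^2) ≤ 2*π*(s*m) := mul_le_mul_of_nonneg_left G (by positivity)
  have J : π^2*m - 2*π*(s*m) = π*(δ*m) := by rw [hδdef]; ring
  have H : 0 ≤ π*(δ*m) := mul_nonneg hπ.le (mul_nonneg hδ0.le hm0.le)
  have hQ : 0 ≤ π^2*m - 2*π*δ*m^2 + δ^2*m^2 := by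
    clear * - I J H; nlinarith [I, J, H, sq_nonneg (δ*m)]
  rw [abs_of_nonneg (by positivity : (0:ℝ) ≤ 1/m^2),
    abs_of_nonneg (div_nonneg hQ (by positivity))]
  rw [div_le_iff₀ (by positivity : (0:ℝ) < 4*m^2)]
  have : 10 * (1/m^2) * (4*m^2) = 40 := by field_simp; ring
  rw [this]; exact hP
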